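/- Let p∈ℕ∪{0} and q>1 be fixed. There exists a positive constant K₁(q,p) such that for all n≥1 and all x∈[0,∞): w_p(x)·M_{n,q}(1/w_p;x) ≤ K₁(q,p), i.e. ‖M_{n,q}(1/w_p)‖_p ≤ K₁(q,p). -/

import Mathlib

open scoped BigOperators

/-- The `q`-integer `[k]_q = (q^k - 1)/(q - 1)`. -/
noncomputable def qNat (q : ℝ) (k : ℕ) : ℝ := (q ^ k - 1) / (q - 1)

/-- The `q`-factorial `[k]_q! = [1]_q [2]_q ⋯ [k]_q`, with `[0]_q! = 1`. -/
noncomputable def qFactorial (q : ℝ) : ℕ → ℝ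
  | 0 => 1
  | k + 1 => qFactorial q k * qNat q (k + 1)

/-- The `q`-exponential function `e_q(z) = ∑_{k=0}^∞ z^k/[k]_q!`. -/
noncomputable def qExp (q z : ℝ) : ℝ := ∑' k : ℕ, z ^ k / qFactorial q k

/-- The `q`-Szász basis function
`s_{n,k}(q;x) = q^{-k(k-1)/2} ([n]_q^k x^k/[k]_q!) e_q(-[n]_q q^{-k} x)`. -/
noncomputable def qSzaszBasis (q : ℝ) (n k : ℕ) (x : ℝ) : ℝ :=
  (q ^ (k * (k - 1) / 2))⁻¹ * (qNat q n ^ k * x ^ k / qFactorial q k) *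
    qExp q (-(qNat q n) * q ^ (-(k : ℤ)) * x)

/-- The `q`-Szász operator `M_{n,q}(f;x) = ∑_{k=0}^∞ f([k]_q/[n]_q) s_{n,k}(q;x)`. -/
noncomputable def qSzasz (q : ℝ) (n : ℕ) (f : ℝ → ℝ) (x : ℝ) : ℝ :=
  ∑' k : ℕ, f (qNat q k / qNat q n) * qSzaszBasis q n k x

/-- The weight `w_0(x) = 1`, `w_p(x) = (1 + x^p)⁻¹` for `p ≥ 1`. -/
noncomputable def weight (p : ℕ) (x : ℝ) : ℝ := if p = 0 then 1 else (1 + x ^ p)⁻¹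

/-- The weighted sup-norm `‖f‖_p = sup_{x ≥ 0} w_p(x)|f(x)|`. -/
noncomputable def wnorm (p : ℕ) (f : ℝ → ℝ) : ℝ :=
  ⨆ x : Set.Ici (0 : ℝ), weight p x.1 * |f x.1|

/-- Membership in the space `C_p`: `f` is continuous on `[0,∞)` and `w_p f` is
uniformly continuous and bounded on `[0,∞)`. -/
def MemCp (p : ℕ) (f : ℝ → ℝ) : Prop :=
  ContinuousOn f (Set.Ici 0) ∧
  UniformContinuousOn (fun x => weight p x * f x) (Set.Ici 0) ∧
  ∃ M : ℝ, ∀ x ∈ Set.Ici (0 : ℝ), |weight p x * f x| ≤ M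

/-- The second difference `Δ_h² f(x) = f(x+2h) - 2f(x+h) + f(x)`. -/
noncomputable def delta2 (f : ℝ → ℝ) (h x : ℝ) : ℝ := f (x + 2 * h) - 2 * f (x + h) + f x

/-- The second modulus of smoothness `ω_p²(f;δ) = sup_{0<h≤δ} ‖Δ_h² f‖_p`. -/
noncomputable def omega2 (p : ℕ) (f : ℝ → ℝ) (δ : ℝ) : ℝ :=
  ⨆ h : {h : ℝ // 0 < h ∧ h ≤ δ}, wnorm p (fun x => delta2 f h.1 x)

/-- The (first) modulus of continuity on `[0,∞)`:
`ω(g;δ) = sup {|g(s)-g(t)| : s,t ≥ 0, |s-t| ≤ δ}`. -/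
noncomputable def omega1 (g : ℝ → ℝ) (δ : ℝ) : ℝ :=
  sSup {d : ℝ | ∃ s t : ℝ, 0 ≤ s ∧ 0 ≤ t ∧ |s - t| ≤ δ ∧ d = |g s - g t|}

/-- The `q`-derivative `(D_q g)(x) = (g(qx) - g(x))/((q-1)x)`. -/
noncomputable def qDeriv (q : ℝ) (g : ℝ → ℝ) (x : ℝ) : ℝ := (g (q * x) - g x) / ((q - 1) * x)

/-- The `q`-Stirling-type numbers: `S_q(0,0)=1`, `S_q(m,0)=0` for `m>0`,
`S_q(m,j)=0` for `m<j`, and `S_q(m+1,j)=[j]_q S_q(m,j) + S_q(m,j-1)`. -/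
noncomputable def qStirling (q : ℝ) : ℕ → ℕ → ℝ
  | 0, 0 => 1
  | 0, _ + 1 => 0
  | _ + 1, 0 => 0
  | m + 1, j + 1 => qNat q (j + 1) * qStirling q m (j + 1) + qStirling q m j

/-!
For `p ≥ 1` one has `1/w_p(t) = 1 + t^p`, and `M_{n,q}` maps this to an explicit polynomial.
With `y = [n]_q x` the basis function `s_{n,k}(q;x)` is
`φ_k(y) = q^{-k(k-1)/2} y^k/[k]_q! e_q(-y q^{-k})`.
Expanding `e_q` gives an absolutely convergent double series whose antidiagonal sums vanish in
positive degree by Gauss' identity, so `∑_k φ_k(y) = 1`. Shifting the index by `j` turns this into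
the factorial-moment identity `∑_k ∏_{i<j} ([k]_q - [i]_q) φ_k(y) = y^j`, and the `q`-Stirling
numbers expand `[k]_q^p` in these products, so that
`M_{n,q}(t^p; x) = [n]_q^{-p} ∑_j S_q(p,j) ([n]_q x)^j`. As `[n]_q ≥ 1` and `x^j ≤ 1 + x^p`,
`w_p(x) M_{n,q}(1/w_p; x) ≤ 1 + ∑_j S_q(p,j)`.
-/

open Finset Nat

lemma Nat.choose_two_add (l m : ℕ) : (l + m).choose 2 = l.choose 2 + l * m + m.choose 2 := by
  induction m with
  | zero => simp
  | succ m ih =>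
    rw [← add_assoc, choose_succ_succ', ih, choose_succ_succ']
    simp only [choose_one_right]
    ring

section

variable {q : ℝ}

lemma qNat_zero (q : ℝ) : qNat q 0 = 0 := by simp [qNat]

lemma qNat_eq_sum_pow (hq : q ≠ 1) (k : ℕ) : qNat q k = ∑ i ∈ range k, q ^ i :=
  (geom_sum_eq hq k).symm

lemma qNat_add (hq : q ≠ 1) (m k : ℕ) : qNat q (m + k) = qNat q m + q ^ m * qNat q k := by
  simp only [qNat_eq_sum_pow hq, sum_range_add, pow_add, mul_sum]

lemma natCast_le_qNat (hq : 1 < q) (k : ℕ) : (k : ℝ) ≤ qNat q k := by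
  rw [qNat_eq_sum_pow hq.ne']
  simpa using sum_le_sum fun i (_ : i ∈ range k) => one_le_pow₀ hq.le

lemma qNat_nonneg (hq : 1 < q) (k : ℕ) : 0 ≤ qNat q k :=
  k.cast_nonneg.trans (natCast_le_qNat hq k)

lemma qNat_pos (hq : 1 < q) {k : ℕ} (hk : k ≠ 0) : 0 < qNat q k :=
  (cast_pos.2 (pos_of_ne_zero hk)).trans_le (natCast_le_qNat hq k)

lemma factorial_le_qFactorial (hq : 1 < q) (k : ℕ) : (k ! : ℝ) ≤ qFactorial q k := by
  induction k with
  | zero => simp [qFactorial]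
  | succ k ih =>
    rw [factorial_succ, cast_mul, mul_comm, qFactorial]
    exact mul_le_mul ih (natCast_le_qNat hq _) (by positivity) ((cast_nonneg _).trans ih)

lemma qFactorial_pos (hq : 1 < q) (k : ℕ) : 0 < qFactorial q k :=
  (cast_pos.2 k.factorial_pos).trans_le (factorial_le_qFactorial hq k)

lemma summable_pow_div_qFactorial (hq : 1 < q) (z : ℝ) :
    Summable fun k => z ^ k / qFactorial q k :=
  (Real.summable_pow_div_factorial |z|).of_norm_bounded fun k => by
    rw [norm_div, norm_pow, Real.norm_eq_abs, Real.norm_of_nonneg (qFactorial_pos hq k).le]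
    exact div_le_div_of_nonneg_left (by positivity) (by positivity) (factorial_le_qFactorial hq k)

/-- Gauss' identity `∑ (-1)^m q^(m(m-1)/2) [N, m]_q = 0` for `N ≥ 1`; equivalently, the
coefficients of `e_q(z) ∑ (-1)^m q^(m(m-1)/2) z^m/[m]_q!` vanish in positive degree. -/
lemma sum_antidiagonal_succ_neg_one_pow_div_qFactorial (hq : 1 < q) (N : ℕ) :
    ∑ x ∈ antidiagonal (N + 1),
      (-1) ^ x.2 * q ^ x.2.choose 2 / (qFactorial q x.1 * qFactorial q x.2) = 0 := by
  set c : ℕ × ℕ → ℝ :=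
    fun x => (-1) ^ x.2 * q ^ x.2.choose 2 / (qFactorial q x.1 * qFactorial q x.2)
  -- `[l + m]_q = [m]_q + q^m [l]_q` splits the sum into two that cancel after an index shift.
  have split : ∀ x ∈ antidiagonal (N + 1),
      qNat q (N + 1) * c x = qNat q x.2 * c x + q ^ x.2 * qNat q x.1 * c x := by
    intro x hx
    rw [← mem_antidiagonal.1 hx, add_comm, qNat_add hq.ne']
    ring
  have left : ∑ x ∈ antidiagonal (N + 1), qNat q x.2 * c x = ∑ x ∈ antidiagonal N,
      -((-1) ^ x.2 * q ^ (x.2.choose 2 + x.2) / (qFactorial q x.1 * qFactorial q x.2)) := by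
    rw [Nat.sum_antidiagonal_succ', qNat_zero, zero_mul, zero_add]
    refine sum_congr rfl fun x _ => ?_
    have := (qNat_pos hq x.2.succ_ne_zero).ne'
    simp only [c, qFactorial, choose_succ_succ', choose_one_right]
    field_simp
    ring
  have right : ∑ x ∈ antidiagonal (N + 1), q ^ x.2 * qNat q x.1 * c x = ∑ x ∈ antidiagonal N,
      (-1) ^ x.2 * q ^ (x.2.choose 2 + x.2) / (qFactorial q x.1 * qFactorial q x.2) := by
    rw [Nat.sum_antidiagonal_succ, qNat_zero, mul_zero, zero_mul, zero_add]
    refine sum_congr rfl fun x _ => ?_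
    have := (qNat_pos hq x.1.succ_ne_zero).ne'
    simp only [c, qFactorial]
    field_simp
    ring
  have hN : qNat q (N + 1) * ∑ x ∈ antidiagonal (N + 1), c x = 0 := by
    rw [mul_sum, sum_congr rfl split, sum_add_distrib, left, right, ← sum_add_distrib]
    exact sum_eq_zero fun x _ => neg_add_cancel _
  exact (mul_eq_zero.1 hN).resolve_left (qNat_pos hq N.succ_ne_zero).ne'

noncomputable def qSzaszKernel (q y : ℝ) (k : ℕ) : ℝ :=
  q⁻¹ ^ k.choose 2 * (y ^ k / qFactorial q k) * qExp q (-(y * q⁻¹ ^ k))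

lemma qSzaszBasis_eq_qSzaszKernel (q : ℝ) (n k : ℕ) (x : ℝ) :
    qSzaszBasis q n k x = qSzaszKernel q (qNat q n * x) k := by
  rw [qSzaszBasis, qSzaszKernel, ← choose_two_right, zpow_neg, zpow_natCast, inv_pow, inv_pow,
    mul_pow]
  ring_nf

noncomputable def qSzaszKernelTerm (q y : ℝ) (x : ℕ × ℕ) : ℝ :=
  q⁻¹ ^ x.1.choose 2 * (y ^ x.1 / qFactorial q x.1) * ((-(y * q⁻¹ ^ x.1)) ^ x.2 / qFactorial q x.2)

lemma summable_qSzaszKernelTerm (hq : 1 < q) (y : ℝ) : Summable (qSzaszKernelTerm q y) := by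
  have hF := qFactorial_pos hq
  have hr : q⁻¹ ≤ 1 := inv_le_one_of_one_le₀ hq.le
  have hs := summable_pow_div_qFactorial hq |y|
  refine (hs.mul_of_nonneg hs (fun k => div_nonneg (by positivity) (hF k).le)
    fun k => div_nonneg (by positivity) (hF k).le).of_norm_bounded ?_
  rintro ⟨l, m⟩
  have hr0 : 0 ≤ q⁻¹ := by positivity
  simp only [qSzaszKernelTerm, norm_mul, norm_div, norm_pow, norm_neg, Real.norm_eq_abs,
    abs_of_pos (hF _), abs_of_nonneg hr0]
  have hrl : q⁻¹ ^ l ≤ 1 := pow_le_one₀ hr0 hr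
  have hrc : q⁻¹ ^ l.choose 2 ≤ 1 := pow_le_one₀ hr0 hr
  have hFl := hF l
  have hFm := hF m
  exact mul_le_mul (mul_le_of_le_one_left (by positivity) hrc)
    (div_le_div_of_nonneg_right (pow_le_pow_left₀ (by positivity)
      (mul_le_of_le_one_right (abs_nonneg y) hrl) m) hFm.le) (by positivity) (by positivity)

lemma sum_antidiagonal_qSzaszKernelTerm (hq : 1 < q) (y : ℝ) (N : ℕ) :
    ∑ x ∈ antidiagonal N, qSzaszKernelTerm q y x = if N = 0 then 1 else 0 := by
  rcases N with _ | N
  · simp [qSzaszKernelTerm, qFactorial]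
  have hF := qFactorial_pos hq
  rw [if_neg N.succ_ne_zero, ← mul_zero (y ^ (N + 1) * q⁻¹ ^ (N + 1).choose 2),
    ← sum_antidiagonal_succ_neg_one_pow_div_qFactorial hq N, mul_sum]
  refine sum_congr rfl fun x hx => ?_
  rw [← mem_antidiagonal.1 hx, choose_two_add]
  have := (hF x.1).ne'
  have := (hF x.2).ne'
  have : q ≠ 0 := by positivity
  simp only [qSzaszKernelTerm, pow_add, mul_pow, neg_pow (_ * _), inv_pow]
  field_simp
  ring

lemma hasSum_qSzaszKernel (hq : 1 < q) (y : ℝ) : HasSum (qSzaszKernel q y) 1 := by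
  have hdiag : HasSum (fun N => ∑ x ∈ antidiagonal N, qSzaszKernelTerm q y x)
      (∑' x, qSzaszKernelTerm q y x) :=
    (HasAntidiagonal.sigmaAntidiagonalEquivProd.hasSum_iff.2
      (summable_qSzaszKernelTerm hq y).hasSum).sigma fun N => Finset.hasSum _ _
  simp only [sum_antidiagonal_qSzaszKernelTerm hq] at hdiag
  rw [(hasSum_ite_eq 0 1).unique hdiag]
  exact (summable_qSzaszKernelTerm hq y).hasSum.prod_fiberwise fun l =>
    (summable_pow_div_qFactorial hq _).hasSum.mul_left _

noncomputable def qDescFactorial (q : ℝ) (k j : ℕ) : ℝ :=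
  ∏ i ∈ range j, (qNat q k - qNat q i)

lemma qDescFactorial_succ (q : ℝ) (k j : ℕ) :
    qDescFactorial q k (j + 1) = qDescFactorial q k j * (qNat q k - qNat q j) :=
  prod_range_succ _ _

lemma qDescFactorial_eq_zero_of_lt (q : ℝ) {k j : ℕ} (h : k < j) : qDescFactorial q k j = 0 :=
  prod_eq_zero (mem_range.2 h) (sub_self _)

lemma qDescFactorial_add_mul_qFactorial (hq : q ≠ 1) (l j : ℕ) :
    qDescFactorial q (l + j) j * qFactorial q l = q ^ j.choose 2 * qFactorial q (l + j) := by
  induction j generalizing l with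
  | zero => simp [qDescFactorial]
  | succ j ih =>
    have ih : qDescFactorial q (l + j + 1) j * (qFactorial q l * qNat q (l + 1)) =
        q ^ j.choose 2 * qFactorial q (l + j + 1) := by
      rw [add_right_comm, ← ih (l + 1), qFactorial]
    have hsub : qNat q (l + j + 1) - qNat q j = q ^ j * qNat q (l + 1) := by
      rw [show l + j + 1 = j + (l + 1) by ring, qNat_add hq, add_sub_cancel_left]
    rw [qDescFactorial_succ, ← add_assoc, hsub, choose_succ_succ', choose_one_right, pow_add]
    linear_combination q ^ j * ih

lemma qNat_mul_qDescFactorial (q : ℝ) (k j : ℕ) :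
    qNat q k * qDescFactorial q k j =
      qDescFactorial q k (j + 1) + qNat q j * qDescFactorial q k j := by
  rw [qDescFactorial_succ]
  ring

lemma qStirling_eq_zero_of_lt (q : ℝ) {m j : ℕ} (h : m < j) : qStirling q m j = 0 := by
  induction m generalizing j with
  | zero => obtain ⟨j, rfl⟩ := exists_eq_succ_of_ne_zero h.ne'; rfl
  | succ m ih =>
    obtain ⟨j, rfl⟩ := exists_eq_succ_of_ne_zero (zero_lt_of_lt h).ne'
    simp only [qStirling, ih (by omega : m < j + 1), ih (by omega : m < j), mul_zero, add_zero]

lemma qStirling_nonneg (hq : 1 < q) (m j : ℕ) : 0 ≤ qStirling q m j := by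
  induction m generalizing j with
  | zero => cases j <;> simp [qStirling]
  | succ m ih =>
    cases j with
    | zero => simp [qStirling]
    | succ j =>
      have := qNat_nonneg hq (j + 1)
      have := ih j
      have := ih (j + 1)
      simp only [qStirling]
      positivity

lemma qNat_pow_eq_sum_qStirling_mul_qDescFactorial (q : ℝ) (m k : ℕ) :
    qNat q k ^ m = ∑ j ∈ range (m + 1), qStirling q m j * qDescFactorial q k j := by
  induction m with
  | zero => simp [qStirling, qDescFactorial]
  | succ m ih =>
    have shift : ∑ j ∈ range (m + 1), qNat q (j + 1) * qStirling q m (j + 1) *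
        qDescFactorial q k (j + 1) =
        ∑ j ∈ range (m + 1), qNat q j * qStirling q m j * qDescFactorial q k j := by
      have h := sum_range_succ' (fun j => qNat q j * qStirling q m j * qDescFactorial q k j) (m + 1)
      rw [sum_range_succ, qStirling_eq_zero_of_lt q m.lt_succ_self, qNat_zero] at h
      simpa using h.symm
    rw [sum_range_succ', pow_succ, ih, sum_mul]
    simp only [qStirling, add_mul, zero_mul, add_zero]
    rw [sum_add_distrib, shift, ← sum_add_distrib]
    refine sum_congr rfl fun j _ => ?_
    rw [mul_assoc, mul_comm _ (qNat q k), qNat_mul_qDescFactorial]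
    ring

lemma qDescFactorial_add_mul_qSzaszKernel (hq : 1 < q) (y : ℝ) (l j : ℕ) :
    qDescFactorial q (l + j) j * qSzaszKernel q y (l + j) =
      y ^ j * qSzaszKernel q (y * q⁻¹ ^ j) l := by
  have hl := (qFactorial_pos hq l).ne'
  have hlj := (qFactorial_pos hq (l + j)).ne'
  have hq0 : q ≠ 0 := by positivity
  have hD := qDescFactorial_add_mul_qFactorial hq.ne' l j
  rw [← eq_div_iff hl] at hD
  simp only [qSzaszKernel, hD, choose_two_add, pow_add, mul_pow, inv_pow, ← mul_assoc]
  field_simp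
  ring

lemma hasSum_qDescFactorial_mul_qSzaszKernel (hq : 1 < q) (y : ℝ) (j : ℕ) :
    HasSum (fun k => qDescFactorial q k j * qSzaszKernel q y k) (y ^ j) := by
  rw [← hasSum_nat_add_iff' j, sum_eq_zero fun k hk => by
    rw [qDescFactorial_eq_zero_of_lt q (mem_range.1 hk), zero_mul], sub_zero]
  simp only [qDescFactorial_add_mul_qSzaszKernel hq]
  simpa using (hasSum_qSzaszKernel hq (y * q⁻¹ ^ j)).mul_left (y ^ j)

lemma hasSum_qNat_pow_mul_qSzaszKernel (hq : 1 < q) (y : ℝ) (m : ℕ) :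
    HasSum (fun k => qNat q k ^ m * qSzaszKernel q y k)
      (∑ j ∈ range (m + 1), qStirling q m j * y ^ j) := by
  simp only [qNat_pow_eq_sum_qStirling_mul_qDescFactorial, sum_mul, mul_assoc]
  exact hasSum_sum fun j _ => (hasSum_qDescFactorial_mul_qSzaszKernel hq y j).mul_left _

lemma qSzasz_one (hq : 1 < q) (n : ℕ) (x : ℝ) : qSzasz q n (fun _ => 1) x = 1 := by
  simpa [qSzasz, qSzaszBasis_eq_qSzaszKernel] using (hasSum_qSzaszKernel hq _).tsum_eq

lemma qSzasz_one_add_pow (hq : 1 < q) (n : ℕ) (x : ℝ) (p : ℕ) :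
    qSzasz q n (fun t => 1 + t ^ p) x =
      1 + (∑ j ∈ range (p + 1), qStirling q p j * (qNat q n * x) ^ j) / qNat q n ^ p := by
  refine HasSum.tsum_eq ?_
  convert (hasSum_qSzaszKernel hq (qNat q n * x)).add
    ((hasSum_qNat_pow_mul_qSzaszKernel hq (qNat q n * x) p).div_const (qNat q n ^ p)) using 1
  funext k
  simp only [qSzaszBasis_eq_qSzaszKernel, div_pow]
  ring

lemma sum_mul_pow_div_pow_le_sum_mul {c : ℕ → ℝ} (hc : ∀ j, 0 ≤ c j) {N x : ℝ} (hN : 1 ≤ N)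
    (hx : 0 ≤ x) (p : ℕ) :
    (∑ j ∈ range (p + 1), c j * (N * x) ^ j) / N ^ p ≤
      (∑ j ∈ range (p + 1), c j) * (1 + x ^ p) := by
  rw [sum_div, sum_mul]
  refine sum_le_sum fun j hj => ?_
  have hjp : j ≤ p := Nat.lt_succ_iff.1 (mem_range.1 hj)
  have hNj : N ^ j / N ^ p ≤ 1 :=
    div_le_one_of_le₀ (pow_le_pow_right₀ hN hjp) (by positivity)
  have hxj : x ^ j ≤ 1 + x ^ p := by
    rcases le_total x 1 with h | h
    · linarith [pow_le_one₀ hx h (n := j), pow_nonneg hx p]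
    · linarith [pow_le_pow_right₀ h hjp]
  calc c j * (N * x) ^ j / N ^ p = c j * (x ^ j * (N ^ j / N ^ p)) := by ring
    _ ≤ c j * (1 + x ^ p) :=
      mul_le_mul_of_nonneg_left ((mul_le_of_le_one_right (pow_nonneg hx j) hNj).trans hxj) (hc j)

end

/-- `‖M_{n,q}(1/w_p)‖_p ≤ K₁(q,p)` uniformly in `n`. -/
theorem qSzasz_weight_bound (p : ℕ) (q : ℝ) (hq : 1 < q) :
    ∃ K : ℝ, 0 < K ∧ ∀ n : ℕ, 1 ≤ n → ∀ x : ℝ, 0 ≤ x →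
      weight p x * qSzasz q n (fun t => (weight p t)⁻¹) x ≤ K := by
  set C := ∑ j ∈ range (p + 1), qStirling q p j
  have hC : 0 ≤ C := sum_nonneg fun j _ => qStirling_nonneg hq p j
  refine ⟨1 + C, by positivity, fun n hn x hx => ?_⟩
  rcases eq_or_ne p 0 with rfl | hp
  · simp only [weight, if_true, inv_one, one_mul, qSzasz_one hq]
    linarith
  have hw : weight p = fun t => (1 + t ^ p)⁻¹ := funext fun t => if_neg hp
  have hqn : 1 ≤ qNat q n := by simpa using (cast_le.2 hn).trans (natCast_le_qNat hq n)
  simp only [hw, inv_inv, qSzasz_one_add_pow hq]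
  calc (1 + x ^ p)⁻¹ * (1 + (∑ j ∈ range (p + 1), qStirling q p j * (qNat q n * x) ^ j) /
        qNat q n ^ p) ≤ (1 + x ^ p)⁻¹ * (1 + C * (1 + x ^ p)) := by
        gcongr
        exact sum_mul_pow_div_pow_le_sum_mul (qStirling_nonneg hq p) hqn hx p
    _ = (1 + x ^ p)⁻¹ + C := by field_simp
    _ ≤ 1 + C := by
        gcongr
        exact inv_le_one_of_one_le₀ (by linarith [pow_nonneg hx p])
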